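/- Let L > 0, let λ be the normalized Lebesgue measure on [0,L], let μ be the probability measure on [0,π] with μ(B) = (1/2)∫_B sin(θ) dθ, and let F : [0,L] × [0,π] → [0,L] × [0,π] be a measurable map that preserves λ × μ. Then λ × μ is invariant for the random billiard map F̄(s,θ) = F(s, T_i(θ)) applied with probability p_i(θ): for every Borel set E ⊆ [0,L] × [0,π], (λ×μ)(E) = Σ_{i=1}^4 ∬ 1_E(F(s, T_i(θ))) p_i(θ) dλ(s) dμ(θ). -/

import Mathlib

/-!
By Fubini, with `G θ = ∫ 1_E (F (s, θ)) dλ(s)`, invariance of `λ × μ` under `F` gives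
`(λ × μ) E = ∫ G dμ`, while the right-hand side is `∫ G d(Kμ)` for `Kμ = ∑ᵢ (Tᵢ)₊ (pᵢ μ)`,
one step of the Feres random map. So it suffices that `μ` is stationary: `Kμ = μ`. Each `Tᵢ`
is an isometry of `ℝ`, so `(Tᵢ)₊ (pᵢ μ)` has Lebesgue density `η ↦ ((1/2) sin · pᵢ) (Tᵢ⁻¹ η)`,
and stationarity is the identity `∑ᵢ ((1/2) sin · pᵢ) (Tᵢ⁻¹ η) = (1/2) sin η` on `[0, π]`.
Since `sin θ · u_a θ = sin (θ + a) / (2 cos a)`, away from the points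
`0, α, 2α, 3α, π - 3α, π - 2α, π - α, π` each term is a single multiple of a sine, and the
identity follows from `sin (x + α) + sin (x - α) = 2 cos α sin x`.
-/

open Real MeasureTheory Set Filter Topology
open scoped ENNReal NNReal

noncomputable section

namespace RandomBilliard

/-- The four maps `T_1, …, T_4` of the Feres random map
(index `i : Fin 4` stands for `T_{i+1}`). -/
def T (α : ℝ) : Fin 4 → ℝ → ℝ
  | 0 => fun θ => θ + 2 * α
  | 1 => fun θ => -θ + 2 * π - 4 * α
  | 2 => fun θ => θ - 2 * α
  | 3 => fun θ => -θ + 4 * α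

/-- `u_a(θ) = (1/2)(1 + tan a / tan θ)`. -/
def u (a θ : ℝ) : ℝ := 1 / 2 * (1 + Real.tan a / Real.tan θ)

/-- The probabilities `p_1, …, p_4` of the Feres random map
(index `i : Fin 4` stands for `p_{i+1}`). -/
def p (α : ℝ) : Fin 4 → ℝ → ℝ
  | 0 => fun θ =>
      if θ < α then 1
      else if θ < π - 3 * α then u α θ
      else if θ < π - 2 * α then 2 * Real.cos (2 * α) * u (2 * α) θ
      else 0
  | 1 => fun θ =>
      if θ < π - 3 * α then 0
      else if θ < π - 2 * α then u α θ - 2 * Real.cos (2 * α) * u (2 * α) θ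
      else if θ < π - α then u α θ
      else 0
  | 2 => fun θ =>
      if θ < 2 * α then 0
      else if θ < 3 * α then 2 * Real.cos (2 * α) * u (2 * α) (-θ)
      else if θ < π - α then u α (-θ)
      else 1
  | 3 => fun θ =>
      if θ < α then 0
      else if θ < 2 * α then u α (-θ)
      else if θ < 3 * α then u α (-θ) - 2 * Real.cos (2 * α) * u (2 * α) (-θ)
      else 0

/-- `iterT α x k θ = T_x^{(k)}(θ) = T_{x_k} ∘ ⋯ ∘ T_{x_1}(θ)`
(the term `x j : Fin 4` stands for the symbol `x_{j+1}`). -/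
def iterT (α : ℝ) (x : ℕ → Fin 4) : ℕ → ℝ → ℝ
  | 0 => fun θ => θ
  | k + 1 => fun θ => T α (x k) (iterT α x k θ)

/-- `Σ_θ`: the admissible symbol sequences for `θ`, i.e. those whose every finite
prefix has positive probability. -/
def SigmaTheta (α θ : ℝ) : Set (ℕ → Fin 4) :=
  {x | ∀ k : ℕ, 0 < ∏ j ∈ Finset.range k, p α (x j) (iterT α x j θ)}

/-- `C(θ)`: all possible future images of `θ` under the Feres random map. -/
def Cset (α θ : ℝ) : Set ℝ :=
  {θ' | θ' ∈ Set.Ioo 0 π ∧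
    ∃ (x : ℕ → Fin 4) (k : ℕ), x ∈ SigmaTheta α θ ∧ iterT α x k θ = θ'}

/-- The probability measure `μ(A) = (1/2) ∫_A sin θ dθ` on `[0, π]`. -/
def mu0 : Measure ℝ :=
  (volume.restrict (Set.Icc 0 π)).withDensity fun θ => ENNReal.ofReal (1 / 2 * Real.sin θ)

/-- One step of the evolution of a measure under the Feres random map:
`(stepMeasure α ν)(A) = ∫ K(θ, A) dν(θ)`, where `K(θ, A) = Σ_i p_i(θ) 1_A(T_i θ)`. -/
def stepMeasure (α : ℝ) (ν : Measure ℝ) : Measure ℝ :=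
  ∑ i : Fin 4, Measure.map (T α i) (ν.withDensity fun θ => ENNReal.ofReal (p α i θ))

/-- One step of the evolution of a measure under the random billiard map in the circle
`F̄(s, θ) = (s + 2 T_i(θ) mod 2π, T_i(θ))` with probability `p_i(θ)`. -/
def circleStep (α : ℝ) (ν : Measure (ℝ × ℝ)) : Measure (ℝ × ℝ) :=
  ∑ i : Fin 4,
    Measure.map
      (fun q : ℝ × ℝ => (toIcoMod Real.two_pi_pos 0 (q.1 + 2 * T α i q.2), T α i q.2))
      (ν.withDensity fun q => ENNReal.ofReal (p α i q.2))

/-- The transition kernel `K(θ', ·) = Σ_i p_i(θ') δ_{T_i(θ')}` of the Feres random map. -/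
def feresKernel (α : ℝ) (t : ℝ) : Measure ℝ :=
  ∑ i : Fin 4, ENNReal.ofReal (p α i t) • Measure.dirac (T α i t)

/-- `k`-step iterates of a transition kernel. -/
def kerIterate (κ : ℝ → Measure ℝ) : ℕ → ℝ → Measure ℝ
  | 0 => fun t => Measure.dirac t
  | k + 1 => fun t => (κ t).bind (kerIterate κ k)

/-- The probability that a Markov chain with kernel `κ` started at `t` satisfies
`θ_0 ∈ B 0, …, θ_n ∈ B n`. -/
def cylProb (κ : ℝ → Measure ℝ) : ℕ → (ℕ → Set ℝ) → ℝ → ℝ≥0∞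
  | 0 => fun B t => Set.indicator (B 0) (fun _ => (1 : ℝ≥0∞)) t
  | n + 1 => fun B t =>
      Set.indicator (B 0)
        (fun _ => ∫⁻ t', cylProb κ n (fun k => B (k + 1)) t' ∂(κ t)) t

/-- `ν` is the Markov path measure on `ℕ → ℝ` (given by the Ionescu–Tulcea construction)
with initial distribution `ρ` and transition kernel `κ`, characterized by its values
on cylinder sets. -/
def IsMarkovPathMeasure (κ : ℝ → Measure ℝ) (ρ : Measure ℝ) (ν : Measure (ℕ → ℝ)) : Prop :=
  ∀ (n : ℕ) (B : ℕ → Set ℝ), (∀ k, MeasurableSet (B k)) →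
    ν {ω | ∀ k ≤ n, ω k ∈ B k} = ∫⁻ t, cylProb κ n B t ∂ρ

/-- The shift map on sequences. -/
def shift : (ℕ → ℝ) → ℕ → ℝ := fun ω n => ω (n + 1)

/-- Aperiodicity of the Markov chain with kernel `κ` on the state space `S`:
for every state, every common divisor of the return times having positive
probability equals `1` (i.e. every state has period 1). -/
def AperiodicChain (κ : ℝ → Measure ℝ) (S : Set ℝ) : Prop :=
  ∀ t ∈ S, ∀ d : ℕ, (∀ k : ℕ, 1 ≤ k → 0 < kerIterate κ k t {t} → d ∣ k) → d = 1

lemma u_neg (a θ : ℝ) : u a (-θ) = u (-a) θ := by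
  simp only [u, tan_neg, div_neg, neg_div]

lemma u_eq_sin_add_div {a θ : ℝ} (ha : cos a ≠ 0) (hθ : sin θ ≠ 0) :
    u a θ = sin (θ + a) / (2 * cos a * sin θ) := by
  rw [u, tan_eq_sin_div_cos, tan_eq_sin_div_cos, div_div_eq_mul_div, sin_add]
  field_simp

/-- `(1/2) sin θ · p_i(θ)`, the Lebesgue density of `p_i μ` on `[0, π]`, with `u` evaluated. -/
def branchDensity (α : ℝ) : Fin 4 → ℝ → ℝ
  | 0 => fun θ =>
      if θ < α then sin θ / 2
      else if θ < π - 3 * α then sin (θ + α) / (4 * cos α)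
      else if θ < π - 2 * α then sin (θ + 2 * α) / 2
      else 0
  | 1 => fun θ =>
      if θ < π - 3 * α then 0
      else if θ < π - 2 * α then -sin (θ + 3 * α) / (4 * cos α)
      else if θ < π - α then sin (θ + α) / (4 * cos α)
      else 0
  | 2 => fun θ =>
      if θ < 2 * α then 0
      else if θ < 3 * α then sin (θ - 2 * α) / 2
      else if θ < π - α then sin (θ - α) / (4 * cos α)
      else sin θ / 2
  | 3 => fun θ =>
      if θ < α then 0
      else if θ < 2 * α then sin (θ - α) / (4 * cos α)
      else if θ < 3 * α then -sin (θ - 3 * α) / (4 * cos α)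
      else 0

lemma half_sin_mul_p {α : ℝ} (hα : α ∈ Ioo 0 (π / 6)) (i : Fin 4) (θ : ℝ) :
    1 / 2 * sin θ * p α i θ = branchDensity α i θ := by
  obtain ⟨h0, h6⟩ := hα
  have hc1 : cos α ≠ 0 := (cos_pos_of_mem_Ioo ⟨by linarith, by linarith⟩).ne'
  have hc2 : cos (2 * α) ≠ 0 := (cos_pos_of_mem_Ioo ⟨by linarith, by linarith⟩).ne'
  have hs : α ≤ θ → θ < π - α → sin θ ≠ 0 := fun h h' =>
    (sin_pos_of_pos_of_lt_pi (by linarith) (by linarith)).ne'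
  have hadd : sin (θ + 3 * α) = 2 * cos α * sin (θ + 2 * α) - sin (θ + α) := by
    linear_combination (norm := ring_nf) -two_mul_sin_mul_cos (θ + 2 * α) α
  have hsub : sin (θ - 3 * α) = 2 * cos α * sin (θ - 2 * α) - sin (θ - α) := by
    linear_combination (norm := ring_nf) -two_mul_sin_mul_cos (θ - 2 * α) α
  fin_cases i <;> simp only [p, branchDensity] <;> split_ifs
  all_goals first
    | ring1
    | have hθ := hs (by linarith) (by linarith)
      simp only [u_neg, cos_neg, ← sub_eq_add_neg, u_eq_sin_add_div, hc1, hc2, hθ, hadd, hsub,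
        ne_eq, not_false_eq_true]
      field_simp <;> ring1

lemma branchDensity_nonneg {α : ℝ} (hα : α ∈ Ioo 0 (π / 6)) (i : Fin 4) {θ : ℝ}
    (hθ : θ ∈ Icc 0 π) : 0 ≤ branchDensity α i θ := by
  obtain ⟨h0, h6⟩ := hα
  obtain ⟨hθ0, hθπ⟩ := hθ
  have hc : 0 < cos α := cos_pos_of_mem_Ioo ⟨by linarith, by linarith⟩
  fin_cases i <;> simp only [branchDensity] <;> split_ifs
  all_goals first
    | exact le_rfl
    | exact div_nonneg (sin_nonneg_of_nonneg_of_le_pi (by linarith) (by linarith)) (by linarith)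
    | exact div_nonneg (neg_nonneg.2 (sin_nonpos_of_nonpos_of_neg_pi_le (by linarith)
        (by linarith))) (by linarith)
    | refine div_nonneg (neg_nonneg.2 ?_) (by linarith)
      rw [← sin_sub_two_pi]
      exact sin_nonpos_of_nonpos_of_neg_pi_le (by linarith) (by linarith)

def Tinv (α : ℝ) : Fin 4 → ℝ → ℝ
  | 0 => fun η => η - 2 * α
  | 1 => fun η => 2 * π - 4 * α - η
  | 2 => fun η => η + 2 * α
  | 3 => fun η => 4 * α - η

lemma T_Tinv (α : ℝ) (i : Fin 4) (η : ℝ) : T α i (Tinv α i η) = η := by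
  fin_cases i <;> simp only [T, Tinv] <;> ring

set_option maxHeartbeats 400000 in
lemma sum_indicator_branchDensity_Tinv {α : ℝ} (hα : α ∈ Ioo 0 (π / 6)) {η : ℝ}
    (hη : η ∉ ({0, α, 2 * α, 3 * α, π - 3 * α, π - 2 * α, π - α, π} : Set ℝ)) :
    ∑ i, (Icc 0 π).indicator (branchDensity α i) (Tinv α i η) =
      (Icc 0 π).indicator (fun θ => 1 / 2 * sin θ) η := by
  obtain ⟨hα0, hα6⟩ := hα
  have hc : cos α ≠ 0 := (cos_pos_of_mem_Ioo ⟨by linarith, by linarith⟩).ne'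
  have P := fun x => two_mul_sin_mul_cos x α
  have N : ∀ x y, sin (x - y) = -sin (y - x) := fun x y => by rw [← sin_neg, neg_sub]
  simp only [mem_insert_iff, mem_singleton_iff, not_or] at hη
  obtain ⟨n0, n1, n2, n3, n4, n5, n6, n7⟩ := hη
  rcases lt_or_gt_of_ne n0 with h0 | h0 <;> rcases lt_or_gt_of_ne n1 with h1 | h1 <;>
    try (exfalso; linarith)
  all_goals rcases lt_or_gt_of_ne n2 with h2 | h2 <;> try (exfalso; linarith)
  all_goals rcases lt_or_gt_of_ne n3 with h3 | h3 <;> try (exfalso; linarith)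
  all_goals rcases lt_or_gt_of_ne n4 with h4 | h4 <;> try (exfalso; linarith)
  all_goals rcases lt_or_gt_of_ne n5 with h5 | h5 <;> try (exfalso; linarith)
  all_goals rcases lt_or_gt_of_ne n6 with h6 | h6 <;> try (exfalso; linarith)
  all_goals rcases lt_or_gt_of_ne n7 with h7 | h7 <;> try (exfalso; linarith)
  all_goals simp only [Fin.sum_univ_four, Tinv, indicator_apply, branchDensity, mem_Icc]
  all_goals simp (disch := grind) only [if_pos, if_neg, ite_self, add_zero, zero_add]
  all_goals field_simp
  -- `simp` has closed the two cases outside `[0, π]`; the remaining goals are the intervals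
  -- `(0, α), (α, 2α), (2α, 3α), (3α, π - 3α), …, (π - α, π)`, in this order
  · ring_nf
  · linear_combination (norm := ring_nf) -2 * P η - 2 * N α η
  · linear_combination (norm := ring_nf) 2 * P (η - 2 * α) - 2 * P η + 2 * N (3 * α) η
  · linear_combination (norm := ring_nf) -2 * P η
  · linear_combination (norm := ring_nf)
      2 * P (η + 2 * α) + 2 * sin_two_pi_sub (η + 3 * α) - 2 * P η
  · linear_combination (norm := ring_nf) -2 * P η - 2 * sin_two_pi_sub (η + α)
  · ring_nf

lemma measurable_T (α : ℝ) (i : Fin 4) : Measurable (T α i) := by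
  fin_cases i <;> simp only [T] <;> fun_prop

lemma measurable_p (α : ℝ) (i : Fin 4) : Measurable (p α i) := by
  have htan : Measurable tan := by
    rw [funext tan_eq_sin_div_cos]; fun_prop
  have hu : ∀ a, Measurable (u a) := fun a => by unfold u; fun_prop
  fin_cases i <;> simp only [p] <;>
    repeat' first
      | refine Measurable.ite (measurableSet_lt measurable_id measurable_const) ?_ ?_
      | fun_prop

lemma measurePreserving_Tinv (α : ℝ) (i : Fin 4) :
    MeasurePreserving (Tinv α i) volume volume := by
  fin_cases i
  · exact measurePreserving_sub_right volume (2 * α)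
  · exact Measure.measurePreserving_sub_left volume (2 * π - 4 * α)
  · exact measurePreserving_add_right volume (2 * α)
  · exact Measure.measurePreserving_sub_left volume (4 * α)

lemma lintegral_stepMeasure (α : ℝ) (ν : Measure ℝ) {g : ℝ → ℝ≥0∞} (hg : Measurable g) :
    ∫⁻ θ, g θ ∂stepMeasure α ν = ∑ i, ∫⁻ θ, g (T α i θ) * ENNReal.ofReal (p α i θ) ∂ν := by
  simp only [stepMeasure, lintegral_finsetSum_measure, lintegral_map hg (measurable_T α _)]
  refine Finset.sum_congr rfl fun i _ => ?_
  rw [lintegral_withDensity_eq_lintegral_mul _ (measurable_p α i).ennreal_ofReal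
    (g := fun θ => g (T α i θ)) (hg.comp (measurable_T α i))]
  simp only [Pi.mul_apply, mul_comm]

def mu0Density : ℝ → ℝ≥0∞ := (Icc 0 π).indicator fun θ => ENNReal.ofReal (1 / 2 * sin θ)

lemma measurable_mu0Density : Measurable mu0Density :=
  Measurable.indicator (by fun_prop) measurableSet_Icc

lemma mu0_eq_withDensity : mu0 = volume.withDensity mu0Density := by
  rw [mu0, mu0Density, withDensity_indicator measurableSet_Icc]

instance : SFinite mu0 := by
  rw [mu0]; infer_instance

lemma lintegral_comp_T_mul_p_mu0 (α : ℝ) (i : Fin 4) {g : ℝ → ℝ≥0∞} (hg : Measurable g) :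
    ∫⁻ θ, g (T α i θ) * ENNReal.ofReal (p α i θ) ∂mu0 =
      ∫⁻ η, g η * (mu0Density (Tinv α i η) * ENNReal.ofReal (p α i (Tinv α i η))) := by
  have hm : Measurable fun θ => g (T α i θ) * ENNReal.ofReal (p α i θ) :=
    (hg.comp (measurable_T α i)).mul (measurable_p α i).ennreal_ofReal
  rw [mu0_eq_withDensity, lintegral_withDensity_eq_lintegral_mul _ measurable_mu0Density hm,
    ← (measurePreserving_Tinv α i).lintegral_comp (measurable_mu0Density.mul hm)]
  refine lintegral_congr fun η => ?_
  simp only [Pi.mul_apply, T_Tinv]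
  ring

lemma mu0Density_mul_ofReal_p {α : ℝ} (hα : α ∈ Ioo 0 (π / 6)) (i : Fin 4) (θ : ℝ) :
    mu0Density θ * ENNReal.ofReal (p α i θ) =
      ENNReal.ofReal ((Icc 0 π).indicator (branchDensity α i) θ) := by
  by_cases hθ : θ ∈ Icc 0 π
  · rw [mu0Density, indicator_of_mem hθ, indicator_of_mem hθ, ← half_sin_mul_p hα,
      ENNReal.ofReal_mul (mul_nonneg (by norm_num) (sin_nonneg_of_mem_Icc hθ))]
  · simp [mu0Density, indicator_of_notMem hθ]

lemma ae_sum_mu0Density_Tinv_mul_p {α : ℝ} (hα : α ∈ Ioo 0 (π / 6)) :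
    ∀ᵐ η, ∑ i, mu0Density (Tinv α i η) * ENNReal.ofReal (p α i (Tinv α i η)) = mu0Density η := by
  filter_upwards [(Set.toFinite {0, α, 2 * α, 3 * α, π - 3 * α, π - 2 * α, π - α, π}).countable
    |>.ae_notMem volume] with η hη
  simp only [mu0Density_mul_ofReal_p hα]
  rw [← ENNReal.ofReal_sum_of_nonneg fun i _ =>
      indicator_nonneg (fun θ hθ => branchDensity_nonneg hα i hθ) _,
    sum_indicator_branchDensity_Tinv hα hη, mu0Density]
  exact (congr_fun (indicator_comp_of_zero ENNReal.ofReal_zero) η).symm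

theorem stepMeasure_mu0 {α : ℝ} (hα : α ∈ Ioo 0 (π / 6)) : stepMeasure α mu0 = mu0 := by
  refine Measure.ext_of_lintegral _ fun g hg => ?_
  have hm : ∀ i, Measurable fun η =>
      g η * (mu0Density (Tinv α i η) * ENNReal.ofReal (p α i (Tinv α i η))) := fun i =>
    hg.mul ((measurable_mu0Density.comp (measurePreserving_Tinv α i).measurable).mul
      ((measurable_p α i).comp (measurePreserving_Tinv α i).measurable).ennreal_ofReal)
  calc ∫⁻ θ, g θ ∂stepMeasure α mu0
      = ∑ i, ∫⁻ η, g η * (mu0Density (Tinv α i η) * ENNReal.ofReal (p α i (Tinv α i η))) := by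
        simp only [lintegral_stepMeasure α _ hg, lintegral_comp_T_mul_p_mu0 α _ hg]
    _ = ∫⁻ η, g η * ∑ i, mu0Density (Tinv α i η) * ENNReal.ofReal (p α i (Tinv α i η)) := by
        rw [← lintegral_finsetSum _ fun i _ => hm i]
        simp only [Finset.mul_sum]
    _ = ∫⁻ η, g η * mu0Density η :=
        lintegral_congr_ae <| (ae_sum_mu0Density_Tinv_mul_p hα).mono fun η h =>
          congrArg (g η * ·) h
    _ = ∫⁻ θ, g θ ∂mu0 := by
        rw [mu0_eq_withDensity, lintegral_withDensity_eq_lintegral_mul _ measurable_mu0Density hg]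
        simp only [Pi.mul_apply, mul_comm]

end RandomBilliard

open RandomBilliard

theorem prod_measure_invariant_for_F_comp_Tbar_general (α : ℝ) (hα : α ∈ Set.Ioo 0 (π / 6))
    (L : ℝ) (lam : Measure ℝ)
    (hlam : lam = (ENNReal.ofReal L)⁻¹ • volume.restrict (Set.Icc 0 L))
    (F : ℝ × ℝ → ℝ × ℝ)
    (hF : MeasurePreserving F (lam.prod mu0) (lam.prod mu0))
    (E : Set (ℝ × ℝ)) (hE : MeasurableSet E) :
    (lam.prod mu0) E =
      ∑ i : Fin 4, ∫⁻ θ, (∫⁻ s,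
        Set.indicator E (fun _ => (1 : ℝ≥0∞)) (F (s, T α i θ)) * ENNReal.ofReal (p α i θ)
          ∂lam) ∂mu0 := by
  have : SFinite lam := hlam ▸ inferInstance
  have hG : Measurable fun q => E.indicator (fun _ => (1 : ℝ≥0∞)) (F q) :=
    (measurable_const.indicator hE).comp hF.measurable
  calc (lam.prod mu0) E
      = ∫⁻ q, E.indicator (fun _ => (1 : ℝ≥0∞)) (F q) ∂lam.prod mu0 := by
        rw [hF.lintegral_comp (measurable_const.indicator hE)]
        exact (lintegral_indicator_one hE).symm
    _ = ∫⁻ θ, ∫⁻ s, E.indicator (fun _ => 1) (F (s, θ)) ∂lam ∂stepMeasure α mu0 := by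
        rw [stepMeasure_mu0 hα, lintegral_prod_symm' _ hG]
    _ = _ := by
        simp only [lintegral_stepMeasure α mu0 hG.lintegral_prod_left',
          lintegral_mul_const' _ _ ENNReal.ofReal_ne_top]

/-- if the deterministic billiard map `F` preserves `λ × μ`, then
`λ × μ` is invariant for the random billiard map `F̄(s, θ) = F(s, T_i(θ))` with
probability `p_i(θ)`. -/
theorem prod_measure_invariant_for_F_comp_Tbar (α : ℝ) (hα : α ∈ Set.Ioo 0 (π / 6))
    (L : ℝ) (hL : 0 < L) (lam : Measure ℝ)
    (hlam : lam = (ENNReal.ofReal L)⁻¹ • volume.restrict (Set.Icc 0 L))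
    (F : ℝ × ℝ → ℝ × ℝ)
    (hF : MeasurePreserving F (lam.prod mu0) (lam.prod mu0))
    (hFrange : ∀ q ∈ Set.Icc 0 L ×ˢ Set.Icc 0 π, F q ∈ Set.Icc 0 L ×ˢ Set.Icc 0 π)
    (E : Set (ℝ × ℝ)) (hE : MeasurableSet E)
    (hEsub : E ⊆ Set.Icc 0 L ×ˢ Set.Icc 0 π) :
    (lam.prod mu0) E =
      ∑ i : Fin 4, ∫⁻ θ, (∫⁻ s,
        Set.indicator E (fun _ => (1 : ℝ≥0∞)) (F (s, T α i θ)) * ENNReal.ofReal (p α i θ)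
          ∂lam) ∂mu0 :=
  prod_measure_invariant_for_F_comp_Tbar_general α hα L lam hlam F hF E hE
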